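/- arXiv:1511.09064 — 5 statements merged into one kernel-verified Lean document; each statement's English description precedes it below -/
import Mathlib

section
/- With β₁,...,β_m the Kostant cascade in Δ⁺(g,a) and Δ⁺_r defined inductively by Δ⁺₁ = {α ∈ Δ⁺ : β₁ − α ∈ Δ⁺} and Δ⁺_{r+1} = {α ∈ Δ⁺ \ (Δ⁺₁ ∪ ... ∪ Δ⁺_r) : β_{r+1} − α ∈ Δ⁺}, every positive restricted root α either equals some β_r or belongs to exactly one set Δ⁺_r. -/
open scoped RealInnerProductSpace

lemma neg_mem_aux {V : Type*} [NormedAddCommGroup V] [InnerProductSpace ℝ V]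
    (Δ : Set V) (h0 : (0 : V) ∉ Δ)
    (hrefl : ∀ α ∈ Δ, ∀ γ ∈ Δ, γ - (2 * ⟪γ, α⟫ / ⟪α, α⟫) • α ∈ Δ)
    {α : V} (hα : α ∈ Δ) : -α ∈ Δ := by
  have hα0 : α ≠ 0 := fun h => h0 (h ▸ hα)
  have hA : ⟪α, α⟫ ≠ 0 := inner_self_ne_zero.mpr hα0
  have h2 : 2 * ⟪α, α⟫ / ⟪α, α⟫ = (2 : ℝ) := by field_simp
  have := hrefl α hα α hα
  rw [h2] at this
  have he : α - (2 : ℝ) • α = -α := by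
    rw [two_smul]; abel
  rwa [he] at this

lemma root_sub_aux {V : Type*} [NormedAddCommGroup V] [InnerProductSpace ℝ V]
    (Δ : Set V) (h0 : (0 : V) ∉ Δ)
    (hrefl : ∀ α ∈ Δ, ∀ γ ∈ Δ, γ - (2 * ⟪γ, α⟫ / ⟪α, α⟫) • α ∈ Δ)
    (hint : ∀ α ∈ Δ, ∀ γ ∈ Δ, ∃ k : ℤ, 2 * ⟪γ, α⟫ / ⟪α, α⟫ = (k : ℝ))
    {α γ : V} (hα : α ∈ Δ) (hγ : γ ∈ Δ)
    (hip : 0 < ⟪α, γ⟫) (hne : α ≠ γ) : α - γ ∈ Δ := by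
  have hα0 : α ≠ 0 := fun h => h0 (h ▸ hα)
  have hγ0 : γ ≠ 0 := fun h => h0 (h ▸ hγ)
  have hA : (0:ℝ) < ⟪α, α⟫ := lt_of_le_of_ne real_inner_self_nonneg (Ne.symm (inner_self_ne_zero.mpr hα0))
  have hC : (0:ℝ) < ⟪γ, γ⟫ := lt_of_le_of_ne real_inner_self_nonneg (Ne.symm (inner_self_ne_zero.mpr hγ0))
  obtain ⟨n, hn⟩ := hint γ hγ α hα
  obtain ⟨n', hn'⟩ := hint α hα γ hγ
  have hip' : 0 < ⟪γ, α⟫ := by rwa [real_inner_comm]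
  have hnpos : (0:ℝ) < (n:ℝ) := by rw [← hn]; positivity
  have hn'pos : (0:ℝ) < (n':ℝ) := by rw [← hn']; positivity
  have hn1 : (1:ℤ) ≤ n := by exact_mod_cast hnpos
  have hn'1 : (1:ℤ) ≤ n' := by exact_mod_cast hn'pos
  -- if n = 1, reflect α in γ
  rcases eq_or_lt_of_le hn1 with h1 | h1
  · have := hrefl γ hγ α hα
    rw [hn, ← h1] at this
    simpa using this
  rcases eq_or_lt_of_le hn'1 with h1' | h1'
  · have := hrefl α hα γ hγ
    rw [hn', ← h1'] at this
    have : -(γ - α) ∈ Δ := by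
      apply neg_mem_aux Δ h0 hrefl
      simpa using this
    rwa [neg_sub] at this
  -- both ≥ 2 : Cauchy-Schwarz forces n = n' = 2 and α = γ
  exfalso
  have hCS : ⟪α, γ⟫ * ⟪α, γ⟫ ≤ ⟪α, α⟫ * ⟪γ, γ⟫ := real_inner_mul_inner_self_le α γ
  have heq1 : 2 * ⟪α, γ⟫ = (n : ℝ) * ⟪γ, γ⟫ := by
    field_simp at hn; linarith [hn]
  have heq2 : 2 * ⟪γ, α⟫ = (n' : ℝ) * ⟪α, α⟫ := by
    field_simp at hn'; linarith [hn']
  have heq2' : 2 * ⟪α, γ⟫ = (n' : ℝ) * ⟪α, α⟫ := by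
    rwa [real_inner_comm α γ] at heq2
  have hle4 : (n : ℝ) * (n' : ℝ) ≤ 4 := by
    have h1 : (n:ℝ) * ⟪γ, γ⟫ * ((n':ℝ) * ⟪α, α⟫) = 4 * (⟪α, γ⟫ * ⟪α, γ⟫) := by
      rw [← heq1, ← heq2']; ring
    nlinarith [mul_pos hA hC]
  have hle4' : n * n' ≤ 4 := by exact_mod_cast hle4
  have hn2 : n = 2 := by nlinarith
  have hn'2 : n' = 2 := by nlinarith
  have e1 : ⟪α, γ⟫ = ⟪γ, γ⟫ := by rw [hn2] at heq1; push_cast at heq1; linarith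
  have e2 : ⟪α, γ⟫ = ⟪α, α⟫ := by rw [hn'2] at heq2'; push_cast at heq2'; linarith
  have : ⟪α - γ, α - γ⟫ = (0:ℝ) := by
    rw [real_inner_sub_sub_self]; linarith
  exact hne (sub_eq_zero.mp (inner_self_eq_zero.mp this))

/-- With `β₁, …, β_m` the Kostant cascade in an (irreducible,
possibly non-reduced) restricted root system with positive system `Δ⁺`, and the
layers defined inductively by
`Δ⁺_r = {α ∈ Δ⁺ \ (Δ⁺_1 ∪ ⋯ ∪ Δ⁺_{r-1}) : β_r − α ∈ Δ⁺}`,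
every positive root either equals some `β_r` or lies in exactly one layer `Δ⁺_r`. -/
theorem stepwise_sq_int_stmt6
    {V : Type*} [NormedAddCommGroup V] [InnerProductSpace ℝ V]
    (Δ Δpos : Set V) (hfin : Δ.Finite)
    -- root system axioms
    (h0 : (0 : V) ∉ Δ)
    (hrefl : ∀ α ∈ Δ, ∀ γ ∈ Δ, γ - (2 * ⟪γ, α⟫ / ⟪α, α⟫) • α ∈ Δ)
    (hint : ∀ α ∈ Δ, ∀ γ ∈ Δ, ∃ k : ℤ, 2 * ⟪γ, α⟫ / ⟪α, α⟫ = (k : ℝ))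
    -- positive system
    (hsub : Δpos ⊆ Δ)
    (hpos : ∀ α ∈ Δ, (α ∈ Δpos ↔ -α ∉ Δpos))
    (hclosed : ∀ α ∈ Δpos, ∀ γ ∈ Δpos, α + γ ∈ Δ → α + γ ∈ Δpos)
    -- the Kostant cascade
    {m : ℕ} (β : Fin m → V)
    (hβpos : ∀ r, β r ∈ Δpos)
    (horth : ∀ r i : Fin m, i < r → ⟪β r, β i⟫ = 0)
    (hmax : ∀ r : Fin m, ∀ α ∈ Δpos, (∀ i : Fin m, i < r → ⟪α, β i⟫ = 0) →
      α - β r ∈ AddSubmonoid.closure Δpos → α = β r)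
    -- the cascade exhausts `Δ⁺`: no positive root is orthogonal to all `β_i`
    (hcomplete : ∀ α ∈ Δpos, ∃ i : Fin m, ⟪α, β i⟫ ≠ 0)
    -- the layers
    (layer : Fin m → Set V)
    (hlayer : ∀ r : Fin m, layer r
      = {α ∈ Δpos | (∀ i : Fin m, i < r → α ∉ layer i) ∧ β r - α ∈ Δpos}) :
    ∀ α ∈ Δpos, (∃ r, α = β r) ∨ (∃! r, α ∈ layer r) := by
  -- negation closure and key facts
  have hneg : ∀ a ∈ Δ, -a ∈ Δ := fun a ha => neg_mem_aux Δ h0 hrefl ha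
  have key : ∀ α ∈ Δpos, (∀ r, α ≠ β r) → ∃ r, β r - α ∈ Δpos := by
    intro α hα hne
    obtain ⟨i0, hi0⟩ := hcomplete α hα
    obtain ⟨r, hrS, hrmin⟩ := Set.exists_min_image {i : Fin m | ⟪α, β i⟫ ≠ 0} id
      (Set.toFinite _) ⟨i0, hi0⟩
    have horth' : ∀ i : Fin m, i < r → ⟪α, β i⟫ = 0 := by
      intro i hi
      by_contra h
      exact absurd (hrmin i h) (not_le.mpr hi)
    have hβΔ : β r ∈ Δ := hsub (hβpos r)
    have hαΔ : α ∈ Δ := hsub hα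
    rcases lt_trichotomy (⟪α, β r⟫ : ℝ) 0 with hlt | heq | hgt
    · exfalso
      have hnb : -β r ∈ Δ := hneg _ hβΔ
      have hip : (0:ℝ) < ⟪α, -β r⟫ := by
        rw [inner_neg_right]; linarith
      have hne' : α ≠ -β r := by
        intro h
        exact ((hpos (β r) hβΔ).mp (hβpos r)) (h ▸ hα)
      have hsum : α + β r ∈ Δ := by
        have := root_sub_aux Δ h0 hrefl hint hαΔ hnb hip hne'
        rwa [sub_neg_eq_add] at this
      have hsum' : α + β r ∈ Δpos := hclosed α hα (β r) (hβpos r) hsum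
      have hmx := hmax r (α + β r) hsum'
        (by
          intro i hi
          rw [inner_add_left, horth' i hi, horth r i hi, add_zero])
        (by
          rw [add_sub_cancel_right]
          exact AddSubmonoid.subset_closure hα)
      have hz : α = 0 := by simpa using hmx
      exact h0 (hz ▸ hαΔ)
    · exact absurd heq hrS
    · have hd : α - β r ∈ Δ := root_sub_aux Δ h0 hrefl hint hαΔ hβΔ hgt (hne r)
      have hnd : α - β r ∉ Δpos := fun h =>
        hne r (hmax r α hα horth' (AddSubmonoid.subset_closure h))
      have hbd : β r - α ∈ Δ := by
        have := hneg _ hd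
        rwa [neg_sub] at this
      refine ⟨r, ?_⟩
      have hiff := hpos (β r - α) hbd
      rw [neg_sub] at hiff
      exact hiff.mpr hnd
  intro α hα
  by_cases hb : ∃ r, α = β r
  · exact Or.inl hb
  right
  push_neg at hb
  obtain ⟨r, hrT, hrmin⟩ := Set.exists_min_image {i : Fin m | β i - α ∈ Δpos} id
    (Set.toFinite _) (key α hα hb)
  have hmem : α ∈ layer r := by
    rw [hlayer r]
    refine ⟨hα, ?_, hrT⟩
    intro i hi hmemi
    have : β i - α ∈ Δpos := by
      rw [hlayer i] at hmemi
      exact hmemi.2.2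
    exact absurd (hrmin i this) (not_le.mpr hi)
  refine ⟨r, hmem, ?_⟩
  intro r' h'
  by_contra hne'
  rcases Ne.lt_or_gt hne' with h1 | h2
  · rw [hlayer r] at hmem
    exact hmem.2.1 r' h1 h'
  · rw [hlayer r'] at h'
    exact h'.2.1 r h2 hmem
end

section
/- With notation of the Kostant cascade and layers, Δ⁺_r ∪ {β_r} = {α ∈ Δ⁺ : α ⊥ β_i for all i < r, and ⟨α, β_r⟩ > 0}. Consequently the subspaces l_r = g_{β_r} + Σ_{α ∈ Δ⁺_r} g_α satisfy [l_r, l_s] ⊂ l_t where t = min{r,s}. -/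
/-!
For `α ∈ Δ⁺` orthogonal to `β_1, …, β_{r-1}` one has `⟪α, β_r⟫ ≥ 0`: otherwise `α + β_r`
would be a positive root with the same orthogonality, contradicting the maximality of `β_r`.
If `α` and `β_r - α` are both positive roots, applying this to both of them and inducting on `i`
gives `α ⊥ β_i` for `i < r`; and `⟪α, β_r⟫ > 0`, since otherwise reflecting `β_r - α` in `β_r`
produces the root `-(α + β_r)`. Conversely, if `⟪α, β_r⟫ > 0` then `α - β_r` is a root, which by
maximality is negative, so `β_r - α ∈ Δ⁺`. The resulting description of `Δ⁺_r ∪ {β_r}` is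
additive: a root that is the sum of members of the `r`-th and `s`-th sets lies in the
`min r s`-th one, and `[g_γ, g_δ] ⊆ g_{γ+δ}` turns this into `[l_r, l_s] ⊆ l_{min r s}`.
-/

open scoped RealInnerProductSpace

section PositiveSystems

variable {V : Type*} [AddCommGroup V]

structure IsPositiveSystem (Δ P : Set V) : Prop where
  subset : P ⊆ Δ
  mem_iff_neg_notMem : ∀ α ∈ Δ, α ∈ P ↔ -α ∉ P
  add_mem : ∀ α ∈ P, ∀ γ ∈ P, α + γ ∈ Δ → α + γ ∈ P

namespace IsPositiveSystem

variable {Δ P : Set V}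

theorem add_ne_zero (hP : IsPositiveSystem Δ P) {α γ : V} (hα : α ∈ P) (hγ : γ ∈ P) :
    α + γ ≠ 0 := fun h =>
  (hP.mem_iff_neg_notMem γ (hP.subset hγ)).1 hγ (add_eq_zero_iff_eq_neg.1 h ▸ hα)

theorem neg_mem_of_notMem (hP : IsPositiveSystem Δ P) {α : V} (hα : α ∈ Δ) (h : α ∉ P) :
    -α ∈ P := by
  by_contra h'
  exact h ((hP.mem_iff_neg_notMem α hα).2 h')

end IsPositiveSystem

end PositiveSystems

section RootSets

variable {V : Type*} [NormedAddCommGroup V] [InnerProductSpace ℝ V]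

structure IsCrystallographicRootSet (Δ : Set V) : Prop where
  zero_notMem : (0 : V) ∉ Δ
  reflect_mem : ∀ α ∈ Δ, ∀ γ ∈ Δ, γ - (2 * ⟪γ, α⟫ / ⟪α, α⟫) • α ∈ Δ
  exists_int : ∀ α ∈ Δ, ∀ γ ∈ Δ, ∃ k : ℤ, 2 * ⟪γ, α⟫ / ⟪α, α⟫ = k

/-- `β r` is the largest element of `P` orthogonal to all earlier `β i`, with respect to the
order `α ≤ γ ↔ γ - α ∈ AddSubmonoid.closure P`. -/
structure IsCascade {ι : Type*} [LinearOrder ι] (P : Set V) (β : ι → V) : Prop where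
  mem : ∀ r, β r ∈ P
  inner_eq_zero : ∀ r i, i < r → ⟪β r, β i⟫ = 0
  eq_of_sub_mem_closure : ∀ r, ∀ α ∈ P, (∀ i, i < r → ⟪α, β i⟫ = 0) →
    α - β r ∈ AddSubmonoid.closure P → α = β r

/-- For a cascade this is `Δ⁺_r ∪ {β_r}` (see `IsCascade.layer_union_singleton_eq`). -/
def innerLayer {ι : Type*} [Preorder ι] (P : Set V) (β : ι → V) (r : ι) : Set V :=
  {α ∈ P | (∀ i < r, ⟪α, β i⟫ = 0) ∧ 0 < ⟪α, β r⟫}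

namespace IsCrystallographicRootSet

variable {Δ : Set V}

theorem inner_self_pos (hΔ : IsCrystallographicRootSet Δ) {α : V} (hα : α ∈ Δ) :
    0 < ⟪α, α⟫ :=
  real_inner_self_pos.2 (ne_of_mem_of_not_mem hα hΔ.zero_notMem)

theorem neg_mem (hΔ : IsCrystallographicRootSet Δ) {α : V} (hα : α ∈ Δ) : -α ∈ Δ := by
  have h := hΔ.reflect_mem α hα α hα
  rwa [mul_div_assoc, div_self (hΔ.inner_self_pos hα).ne', mul_one, two_smul,
    sub_add_cancel_left] at h

/-- The Cartan integer `2⟪α, δ⟫ / ⟪δ, δ⟫` is negative: if it is `-1`, reflecting `α` in `δ`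
gives `α + δ`; otherwise it is at most `-2`. -/
theorem add_mem_or_inner_le (hΔ : IsCrystallographicRootSet Δ) {α δ : V} (hα : α ∈ Δ)
    (hδ : δ ∈ Δ) (hαδ : ⟪α, δ⟫ < 0) : α + δ ∈ Δ ∨ ⟪α, δ⟫ ≤ -⟪δ, δ⟫ := by
  obtain ⟨k, hk⟩ := hΔ.exists_int δ hδ α hα
  have hδδ := hΔ.inner_self_pos hδ
  have hk_neg : (k : ℝ) < 0 := hk ▸ div_neg_of_neg_of_pos (by linarith) hδδ
  obtain rfl | hk_le : k = -1 ∨ k ≤ -2 := by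
    have : k < 0 := by exact_mod_cast hk_neg
    omega
  · left
    have h := hΔ.reflect_mem δ hδ α hα
    rwa [hk, Int.cast_neg, Int.cast_one, neg_smul, one_smul, sub_neg_eq_add] at h
  · right
    have : (k : ℝ) ≤ -2 := by exact_mod_cast hk_le
    rw [← hk, div_le_iff₀ hδδ] at this
    linarith

theorem add_mem_of_inner_neg (hΔ : IsCrystallographicRootSet Δ) {α δ : V} (hα : α ∈ Δ)
    (hδ : δ ∈ Δ) (hαδ : ⟪α, δ⟫ < 0) (hne : α + δ ≠ 0) : α + δ ∈ Δ := by
  obtain h | hδδ := hΔ.add_mem_or_inner_le hα hδ hαδ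
  · exact h
  obtain h | hαα := hΔ.add_mem_or_inner_le hδ hα (by rwa [real_inner_comm])
  · rwa [add_comm]
  refine absurd (real_inner_self_nonpos.1 ?_) hne
  rw [real_inner_add_add_self, real_inner_comm δ α] at *
  linarith

theorem sub_mem_of_inner_pos (hΔ : IsCrystallographicRootSet Δ) {α δ : V} (hα : α ∈ Δ)
    (hδ : δ ∈ Δ) (hαδ : 0 < ⟪α, δ⟫) (hne : α ≠ δ) : α - δ ∈ Δ := by
  rw [sub_eq_add_neg]
  exact hΔ.add_mem_of_inner_neg hα (hΔ.neg_mem hδ) (by rwa [inner_neg_right, neg_lt_zero])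
    (by rwa [← sub_eq_add_neg, sub_ne_zero])

end IsCrystallographicRootSet

namespace IsCascade

variable {ι : Type*} [LinearOrder ι] {Δ P : Set V} {β : ι → V}

theorem add_notMem (hβ : IsCascade P β) (hΔ : IsCrystallographicRootSet Δ)
    (hP : IsPositiveSystem Δ P) {r : ι} {α : V} (hα : α ∈ P) (hαβ : ∀ i < r, ⟪α, β i⟫ = 0) :
    α + β r ∉ Δ := by
  intro h
  have hsum : α + β r = β r := by
    refine hβ.eq_of_sub_mem_closure r _ (hP.add_mem _ hα _ (hβ.mem r) h) (fun i hi => ?_) ?_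
    · rw [inner_add_left, hαβ i hi, hβ.inner_eq_zero r i hi, add_zero]
    · rw [add_sub_cancel_right]
      exact AddSubmonoid.subset_closure hα
  exact hΔ.zero_notMem (add_eq_right.1 hsum ▸ hP.subset hα)

theorem inner_nonneg (hβ : IsCascade P β) (hΔ : IsCrystallographicRootSet Δ)
    (hP : IsPositiveSystem Δ P) {r : ι} {α : V} (hα : α ∈ P) (hαβ : ∀ i < r, ⟪α, β i⟫ = 0) :
    0 ≤ ⟪α, β r⟫ := by
  by_contra! hneg
  exact hβ.add_notMem hΔ hP hα hαβ <| hΔ.add_mem_of_inner_neg (hP.subset hα)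
    (hP.subset (hβ.mem r)) hneg (hP.add_ne_zero hα (hβ.mem r))

theorem inner_eq_zero_of_sub_mem [WellFoundedLT ι] (hβ : IsCascade P β)
    (hΔ : IsCrystallographicRootSet Δ) (hP : IsPositiveSystem Δ P) {r : ι} {α : V}
    (hα : α ∈ P) (hsub : β r - α ∈ P) : ∀ i < r, ⟪α, β i⟫ = 0 := by
  intro i
  induction i using WellFoundedLT.induction with
  | _ i ih =>
    intro hir
    have hαβ : ∀ j < i, ⟪α, β j⟫ = 0 := fun j hj => ih j hj (hj.trans hir)
    have hα_nonneg := hβ.inner_nonneg hΔ hP hα hαβ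
    have hsub_nonneg := hβ.inner_nonneg hΔ hP hsub fun j hj => by
      rw [inner_sub_left, hβ.inner_eq_zero r j (hj.trans hir), hαβ j hj, sub_zero]
    rw [inner_sub_left, hβ.inner_eq_zero r i hir] at hsub_nonneg
    linarith

theorem inner_pos_of_sub_mem [WellFoundedLT ι] (hβ : IsCascade P β)
    (hΔ : IsCrystallographicRootSet Δ) (hP : IsPositiveSystem Δ P) {r : ι} {α : V}
    (hα : α ∈ P) (hsub : β r - α ∈ P) : 0 < ⟪α, β r⟫ := by
  have hαβ := hβ.inner_eq_zero_of_sub_mem hΔ hP hα hsub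
  refine (hβ.inner_nonneg hΔ hP hα hαβ).lt_of_ne' fun h0 => hβ.add_notMem hΔ hP hα hαβ ?_
  have hβr := hP.subset (hβ.mem r)
  have h := hΔ.neg_mem (hΔ.reflect_mem (β r) hβr (β r - α) (hP.subset hsub))
  rw [inner_sub_left, h0, sub_zero, mul_div_assoc, div_self (hΔ.inner_self_pos hβr).ne',
    mul_one] at h
  convert h using 1
  module

theorem sub_mem_of_inner_pos (hβ : IsCascade P β) (hΔ : IsCrystallographicRootSet Δ)
    (hP : IsPositiveSystem Δ P) {r : ι} {α : V} (hα : α ∈ P) (hαβ : ∀ i < r, ⟪α, β i⟫ = 0)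
    (hpos : 0 < ⟪α, β r⟫) (hne : α ≠ β r) : β r - α ∈ P := by
  have hroot := hΔ.sub_mem_of_inner_pos (hP.subset hα) (hP.subset (hβ.mem r)) hpos hne
  have hneg : α - β r ∉ P := fun h =>
    hne (hβ.eq_of_sub_mem_closure r α hα hαβ (AddSubmonoid.subset_closure h))
  simpa using hP.neg_mem_of_notMem hroot hneg

theorem layer_union_singleton_eq [WellFoundedLT ι] (hβ : IsCascade P β)
    (hΔ : IsCrystallographicRootSet Δ) (hP : IsPositiveSystem Δ P) {layer : ι → Set V}
    (hlayer : ∀ r, layer r = {α ∈ P | (∀ i < r, α ∉ layer i) ∧ β r - α ∈ P}) (r : ι) :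
    layer r ∪ {β r} = innerLayer P β r := by
  ext α
  constructor
  · rintro (hα | rfl)
    · rw [hlayer r] at hα
      obtain ⟨hαP, -, hsub⟩ := hα
      exact ⟨hαP, hβ.inner_eq_zero_of_sub_mem hΔ hP hαP hsub,
        hβ.inner_pos_of_sub_mem hΔ hP hαP hsub⟩
    · exact ⟨hβ.mem r, hβ.inner_eq_zero r, hΔ.inner_self_pos (hP.subset (hβ.mem r))⟩
  · rintro ⟨hαP, hαβ, hpos⟩
    obtain rfl | hne := eq_or_ne α (β r)
    · exact Or.inr rfl
    refine Or.inl ?_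
    rw [hlayer r]
    refine ⟨hαP, fun i hi hαi => ?_, hβ.sub_mem_of_inner_pos hΔ hP hαP hαβ hpos hne⟩
    rw [hlayer i] at hαi
    exact (hβ.inner_pos_of_sub_mem hΔ hP hαi.1 hαi.2.2).ne' (hαβ i hi)

end IsCascade

namespace innerLayer

variable {ι : Type*} [LinearOrder ι] {P : Set V} {β : ι → V}

theorem inner_nonneg_of_le {r t : ι} {α : V} (hα : α ∈ innerLayer P β r) (ht : t ≤ r) :
    0 ≤ ⟪α, β t⟫ := by
  obtain h | rfl := ht.lt_or_eq
  · exact (hα.2.1 t h).ge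
  · exact hα.2.2.le

theorem add_mem_min {r s : ι} {γ δ : V} (hγ : γ ∈ innerLayer P β r)
    (hδ : δ ∈ innerLayer P β s) (hsum : γ + δ ∈ P) : γ + δ ∈ innerLayer P β (min r s) := by
  refine ⟨hsum, fun i hi => ?_, ?_⟩
  · rw [inner_add_left, hγ.2.1 i (hi.trans_le (min_le_left r s)),
      hδ.2.1 i (hi.trans_le (min_le_right r s)), add_zero]
  · have hγ_nonneg := inner_nonneg_of_le hγ (min_le_left r s)
    have hδ_nonneg := inner_nonneg_of_le hδ (min_le_right r s)
    rw [inner_add_left]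
    obtain h | h := min_choice r s <;> rw [h] at hγ_nonneg hδ_nonneg ⊢
    · linarith [hγ.2.2]
    · linarith [hδ.2.2]

end innerLayer

end RootSets

theorem lie_mem_of_mem_biSup {R L ι : Type*} [Semiring R] [LieRing L] [Module R L]
    {f : ι → Submodule R L} {A B : Set ι} {N : Submodule R L}
    (h : ∀ a ∈ A, ∀ b ∈ B, ∀ x ∈ f a, ∀ y ∈ f b, ⁅x, y⁆ ∈ N) {x y : L}
    (hx : x ∈ ⨆ a ∈ A, f a) (hy : y ∈ ⨆ b ∈ B, f b) : ⁅x, y⁆ ∈ N := by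
  rw [iSup_subtype'] at hx hy
  refine Submodule.iSup_induction _ (motive := fun x => ⁅x, y⁆ ∈ N) hx (fun a x hx => ?_)
    (by simp) fun x x' hx hx' => by rw [add_lie]; exact add_mem hx hx'
  refine Submodule.iSup_induction _ (motive := fun y => ⁅x, y⁆ ∈ N) hy
    (fun b y hy => h a a.2 b b.2 x hx y hy) (by simp) fun y y' hy hy' => by
      rw [lie_add]; exact add_mem hy hy'

theorem stepwise_sq_int_stmt7_general
    {V : Type*} [NormedAddCommGroup V] [InnerProductSpace ℝ V]
    (Δ Δpos : Set V)
    (h0 : (0 : V) ∉ Δ)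
    (hrefl : ∀ α ∈ Δ, ∀ γ ∈ Δ, γ - (2 * ⟪γ, α⟫ / ⟪α, α⟫) • α ∈ Δ)
    (hint : ∀ α ∈ Δ, ∀ γ ∈ Δ, ∃ k : ℤ, 2 * ⟪γ, α⟫ / ⟪α, α⟫ = (k : ℝ))
    (hsub : Δpos ⊆ Δ)
    (hpos : ∀ α ∈ Δ, (α ∈ Δpos ↔ -α ∉ Δpos))
    (hclosed : ∀ α ∈ Δpos, ∀ γ ∈ Δpos, α + γ ∈ Δ → α + γ ∈ Δpos)
    {m : ℕ} (β : Fin m → V)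
    (hβpos : ∀ r, β r ∈ Δpos)
    (horth : ∀ r i : Fin m, i < r → ⟪β r, β i⟫ = 0)
    (hmax : ∀ r : Fin m, ∀ α ∈ Δpos, (∀ i : Fin m, i < r → ⟪α, β i⟫ = 0) →
      α - β r ∈ AddSubmonoid.closure Δpos → α = β r)
    (layer : Fin m → Set V)
    (hlayer : ∀ r : Fin m, layer r
      = {α ∈ Δpos | (∀ i : Fin m, i < r → α ∉ layer i) ∧ β r - α ∈ Δpos})
    -- the Lie algebra `g` with its restricted root spaces `rs γ = g_γ`
    {g : Type*} [LieRing g] [LieAlgebra ℝ g]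
    (rs : V → Submodule ℝ g)
    (hrs0 : ∀ γ : V, γ ∉ Δ → γ ≠ 0 → rs γ = ⊥)
    (hbr : ∀ (γ δ : V) (x y : g), x ∈ rs γ → y ∈ rs δ → ⁅x, y⁆ ∈ rs (γ + δ)) :
    (∀ r : Fin m, layer r ∪ {β r}
      = {α ∈ Δpos | (∀ i : Fin m, i < r → ⟪α, β i⟫ = 0) ∧ 0 < ⟪α, β r⟫}) ∧
    (∀ r s : Fin m, ∀ x ∈ rs (β r) ⊔ ⨆ α ∈ layer r, rs α,
      ∀ y ∈ rs (β s) ⊔ ⨆ α ∈ layer s, rs α,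
        ⁅x, y⁆ ∈ rs (β (min r s)) ⊔ ⨆ α ∈ layer (min r s), rs α) := by
  have hΔ : IsCrystallographicRootSet Δ := ⟨h0, hrefl, hint⟩
  have hP : IsPositiveSystem Δ Δpos := ⟨hsub, hpos, hclosed⟩
  have hβ : IsCascade Δpos β := ⟨hβpos, horth, hmax⟩
  have hl := hβ.layer_union_singleton_eq hΔ hP hlayer
  refine ⟨hl, fun r s x hx y hy => ?_⟩
  have hl_sup : ∀ u, rs (β u) ⊔ ⨆ α ∈ layer u, rs α = ⨆ α ∈ innerLayer Δpos β u, rs α :=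
    fun u => by rw [← hl u, Set.union_singleton, iSup_insert]
  rw [hl_sup] at hx hy ⊢
  refine lie_mem_of_mem_biSup (fun γ hγ δ hδ x' hx' y' hy' => ?_) hx hy
  have hxy := hbr γ δ x' y' hx' hy'
  by_cases hsum : γ + δ ∈ Δ
  · exact le_iSup₂ (f := fun α (_ : α ∈ innerLayer Δpos β (min r s)) => rs α) _
      (innerLayer.add_mem_min hγ hδ (hclosed γ hγ.1 δ hδ.1 hsum)) hxy
  · rw [hrs0 _ hsum (hP.add_ne_zero hγ.1 hδ.1), Submodule.mem_bot] at hxy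
    rw [hxy]
    exact zero_mem _

/-- For the Kostant cascade `β₁, …, β_m` and its layers `Δ⁺_r` in
the restricted root system of a real simple Lie algebra `g`, one has
`Δ⁺_r ∪ {β_r} = {α ∈ Δ⁺ : α ⊥ β_i for i < r and ⟨α, β_r⟩ > 0}`, and consequently
the subspaces `l_r = g_{β_r} + Σ_{α ∈ Δ⁺_r} g_α` satisfy `[l_r, l_s] ⊆ l_{min r s}`. -/
theorem stepwise_sq_int_stmt7
    {V : Type*} [NormedAddCommGroup V] [InnerProductSpace ℝ V]
    (Δ Δpos : Set V) (hfin : Δ.Finite)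
    (h0 : (0 : V) ∉ Δ)
    (hrefl : ∀ α ∈ Δ, ∀ γ ∈ Δ, γ - (2 * ⟪γ, α⟫ / ⟪α, α⟫) • α ∈ Δ)
    (hint : ∀ α ∈ Δ, ∀ γ ∈ Δ, ∃ k : ℤ, 2 * ⟪γ, α⟫ / ⟪α, α⟫ = (k : ℝ))
    (hsub : Δpos ⊆ Δ)
    (hpos : ∀ α ∈ Δ, (α ∈ Δpos ↔ -α ∉ Δpos))
    (hclosed : ∀ α ∈ Δpos, ∀ γ ∈ Δpos, α + γ ∈ Δ → α + γ ∈ Δpos)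
    {m : ℕ} (β : Fin m → V)
    (hβpos : ∀ r, β r ∈ Δpos)
    (horth : ∀ r i : Fin m, i < r → ⟪β r, β i⟫ = 0)
    (hmax : ∀ r : Fin m, ∀ α ∈ Δpos, (∀ i : Fin m, i < r → ⟪α, β i⟫ = 0) →
      α - β r ∈ AddSubmonoid.closure Δpos → α = β r)
    (hcomplete : ∀ α ∈ Δpos, ∃ i : Fin m, ⟪α, β i⟫ ≠ 0)
    (layer : Fin m → Set V)
    (hlayer : ∀ r : Fin m, layer r
      = {α ∈ Δpos | (∀ i : Fin m, i < r → α ∉ layer i) ∧ β r - α ∈ Δpos})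
    -- the Lie algebra `g` with its restricted root spaces `rs γ = g_γ`
    {g : Type*} [LieRing g] [LieAlgebra ℝ g]
    (rs : V → Submodule ℝ g)
    (hrs0 : ∀ γ : V, γ ∉ Δ → γ ≠ 0 → rs γ = ⊥)
    (hbr : ∀ (γ δ : V) (x y : g), x ∈ rs γ → y ∈ rs δ → ⁅x, y⁆ ∈ rs (γ + δ)) :
    (∀ r : Fin m, layer r ∪ {β r}
      = {α ∈ Δpos | (∀ i : Fin m, i < r → ⟪α, β i⟫ = 0) ∧ 0 < ⟪α, β r⟫}) ∧
    (∀ r s : Fin m, ∀ x ∈ rs (β r) ⊔ ⨆ α ∈ layer r, rs α,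
      ∀ y ∈ rs (β s) ⊔ ⨆ α ∈ layer s, rs α,
        ⁅x, y⁆ ∈ rs (β (min r s)) ⊔ ⨆ α ∈ layer (min r s), rs α) :=
  stepwise_sq_int_stmt7_general Δ Δpos h0 hrefl hint hsub hpos hclosed β hβpos horth hmax layer
    hlayer rs hrs0 hbr
end

section
/- Let σ_r(α) = −s_{β_r}(α), where s_{β_r} is the Weyl reflection in the cascade root β_r. Then σ_r preserves the layer Δ⁺_r, and for every α ∈ Δ⁺_r one has α + σ_r(α) = β_r. Moreover if α, α' ∈ Δ⁺_r and α + α' is a restricted root, then α + α' = β_r. -/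
/-!
By induction on `r`, every element `α` of the layer `Δ⁺_r` is orthogonal to the earlier cascade
roots, so the maximality of `β_r` forbids both `α + β_r ∈ Δ` and `α - β_r ∈ Δ⁺`.  Then `α` and
`β_r - α` both pair positively with `β_r`; their Cartan integers against `β_r` are positive and
add up to `2`, so both equal `1`, which is `σ_r(α) = β_r - α`.  A root `α + α'` has Cartan
integer `2` against `β_r`; were it not `β_r`, the same argument would make it a layer element,
with Cartan integer `1`.
-/

open scoped RealInnerProductSpace

section RootSystem

variable {V : Type*} [NormedAddCommGroup V] [InnerProductSpace ℝ V]

theorem eq_of_inner_eq_inner_self {x y : V} (hx : ⟪x, y⟫ = ⟪x, x⟫) (hy : ⟪x, y⟫ = ⟪y, y⟫) :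
    x = y := by
  rw [← sub_eq_zero, ← real_inner_self_nonpos, real_inner_sub_sub_self]
  linarith

/-- A possibly non-reduced root system, given as a set of vectors. -/
structure IsRootSet (Δ : Set V) : Prop where
  zero_notMem : (0 : V) ∉ Δ
  reflect_mem : ∀ α ∈ Δ, ∀ γ ∈ Δ, γ - (2 * ⟪γ, α⟫ / ⟪α, α⟫) • α ∈ Δ
  exists_int : ∀ α ∈ Δ, ∀ γ ∈ Δ, ∃ k : ℤ, 2 * ⟪γ, α⟫ / ⟪α, α⟫ = k

namespace IsRootSet

variable {Δ : Set V} {α γ : V}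

theorem inner_self_pos (hΔ : IsRootSet Δ) (hα : α ∈ Δ) : 0 < ⟪α, α⟫ :=
  real_inner_self_pos.2 fun h => hΔ.zero_notMem (h ▸ hα)

theorem sub_smul_mem (hΔ : IsRootSet Δ) (hα : α ∈ Δ) (hγ : γ ∈ Δ) {c : ℝ}
    (h : 2 * ⟪γ, α⟫ = c * ⟪α, α⟫) : γ - c • α ∈ Δ := by
  have := hΔ.reflect_mem α hα γ hγ
  rwa [h, mul_div_cancel_right₀ _ (hΔ.inner_self_pos hα).ne'] at this

theorem exists_int_two_mul_inner (hΔ : IsRootSet Δ) (hα : α ∈ Δ) (hγ : γ ∈ Δ) :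
    ∃ k : ℤ, 2 * ⟪γ, α⟫ = k * ⟪α, α⟫ := by
  obtain ⟨k, hk⟩ := hΔ.exists_int α hα γ hγ
  exact ⟨k, (div_eq_iff (hΔ.inner_self_pos hα).ne').1 hk⟩

theorem neg_mem (hΔ : IsRootSet Δ) (hα : α ∈ Δ) : -α ∈ Δ := by
  have := hΔ.sub_smul_mem hα hα (c := 2) rfl
  rwa [two_smul, sub_add_cancel_left] at this

theorem one_le_of_two_mul_inner_eq (hΔ : IsRootSet Δ) (hα : α ∈ Δ) {k : ℤ}
    (hk : 2 * ⟪γ, α⟫ = k * ⟪α, α⟫) (hpos : 0 < ⟪γ, α⟫) : 1 ≤ k := by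
  have hαα := hΔ.inner_self_pos hα
  have : (0 : ℝ) < k := by nlinarith
  exact_mod_cast this

theorem sub_mem_of_inner_pos (hΔ : IsRootSet Δ) (hα : α ∈ Δ) (hγ : γ ∈ Δ)
    (hpos : 0 < ⟪γ, α⟫) (hne : γ ≠ α) : γ - α ∈ Δ := by
  obtain ⟨k, hk⟩ := hΔ.exists_int_two_mul_inner hα hγ
  obtain ⟨e, he⟩ := hΔ.exists_int_two_mul_inner hγ hα
  have hk1 := hΔ.one_le_of_two_mul_inner_eq hα hk hpos
  have he1 := hΔ.one_le_of_two_mul_inner_eq hγ he (by rwa [real_inner_comm])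
  rcases eq_or_lt_of_le hk1 with rfl | hk2
  · simpa using hΔ.sub_smul_mem hα hγ (c := 1) (by simpa using hk)
  rcases eq_or_lt_of_le he1 with rfl | he2
  · simpa using hΔ.neg_mem (hΔ.sub_smul_mem hγ hα (c := 1) (by simpa using he))
  rw [real_inner_comm] at he
  -- `k, e ≥ 2` together with Cauchy–Schwarz `k e ≤ 4` forces `γ = α`.
  have hCS := real_inner_mul_inner_self_le γ α
  have hαα := hΔ.inner_self_pos hα
  have hγγ := hΔ.inner_self_pos hγ
  have hke : (k * e : ℝ) ≤ 4 := by nlinarith [mul_pos hαα hγγ]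
  have hke' : k * e ≤ 4 := by exact_mod_cast hke
  obtain rfl : k = 2 := by nlinarith
  obtain rfl : e = 2 := by nlinarith
  push_cast at hk he
  exact absurd (eq_of_inner_eq_inner_self (by linarith) (by linarith)) hne

theorem add_mem_of_inner_neg (hΔ : IsRootSet Δ) (hα : α ∈ Δ) (hγ : γ ∈ Δ)
    (hneg : ⟪γ, α⟫ < 0) (hne : γ ≠ -α) : γ + α ∈ Δ := by
  simpa using hΔ.sub_mem_of_inner_pos (hΔ.neg_mem hα) hγ (by rwa [inner_neg_right, neg_pos]) hne

end IsRootSet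

structure IsPositiveSystem_s8 (Δ Δpos : Set V) : Prop where
  isRootSet : IsRootSet Δ
  subset : Δpos ⊆ Δ
  mem_iff_neg_notMem : ∀ α ∈ Δ, α ∈ Δpos ↔ -α ∉ Δpos
  add_mem : ∀ α ∈ Δpos, ∀ γ ∈ Δpos, α + γ ∈ Δ → α + γ ∈ Δpos

def PerpBefore {m : ℕ} (β : Fin m → V) (r : Fin m) (α : V) : Prop :=
  ∀ i < r, ⟪α, β i⟫ = 0

section PerpBefore

variable {m : ℕ} {β : Fin m → V} {r : Fin m} {α γ : V}

theorem PerpBefore.add (hα : PerpBefore β r α) (hγ : PerpBefore β r γ) :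
    PerpBefore β r (α + γ) := fun i hi => by
  rw [inner_add_left, hα i hi, hγ i hi, add_zero]

theorem PerpBefore.sub (hα : PerpBefore β r α) (hγ : PerpBefore β r γ) :
    PerpBefore β r (α - γ) := fun i hi => by
  rw [inner_sub_left, hα i hi, hγ i hi, sub_zero]

theorem PerpBefore.mono {j : Fin m} (hα : PerpBefore β r α) (hjr : j ≤ r) : PerpBefore β j α :=
  fun i hi => hα i (hi.trans_le hjr)

end PerpBefore

/-- Kostant's cascade: `β r` is the highest root among the positive roots orthogonal to the
earlier `β i`. -/
structure IsCascade_s8 (Δ Δpos : Set V) {m : ℕ} (β : Fin m → V) : Prop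
    extends IsPositiveSystem_s8 Δ Δpos where
  mem_pos : ∀ r, β r ∈ Δpos
  inner_eq_zero : ∀ r i : Fin m, i < r → ⟪β r, β i⟫ = 0
  eq_of_sub_mem_closure : ∀ r : Fin m, ∀ α ∈ Δpos, PerpBefore β r α →
    α - β r ∈ AddSubmonoid.closure Δpos → α = β r

/-- The layers `Δ⁺_r`, defined recursively; `IsCascade.mem_layer_iff` recovers the description by
orthogonality to the earlier `β i`. -/
def IsCascadeLayers {m : ℕ} (Δpos : Set V) (β : Fin m → V) (layer : Fin m → Set V) : Prop :=
  ∀ r : Fin m, layer r = {α ∈ Δpos | (∀ i : Fin m, i < r → α ∉ layer i) ∧ β r - α ∈ Δpos}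

namespace IsCascade_s8

variable {Δ Δpos : Set V} {m : ℕ} {β : Fin m → V} {r : Fin m} {δ : V}

theorem perpBefore (hC : IsCascade_s8 Δ Δpos β) (r : Fin m) : PerpBefore β r (β r) :=
  hC.inner_eq_zero r

theorem mem (hC : IsCascade_s8 Δ Δpos β) (r : Fin m) : β r ∈ Δ :=
  hC.subset (hC.mem_pos r)

theorem inner_self_pos (hC : IsCascade_s8 Δ Δpos β) (r : Fin m) : 0 < ⟪β r, β r⟫ :=
  hC.isRootSet.inner_self_pos (hC.mem r)

theorem zero_notMem_pos (hC : IsCascade_s8 Δ Δpos β) : (0 : V) ∉ Δpos :=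
  fun h => hC.isRootSet.zero_notMem (hC.subset h)

theorem eq_of_sub_mem (hC : IsCascade_s8 Δ Δpos β) (hδ : δ ∈ Δpos) (hperp : PerpBefore β r δ)
    (h : δ - β r ∈ Δpos) : δ = β r :=
  hC.eq_of_sub_mem_closure r δ hδ hperp (AddSubmonoid.subset_closure h)

theorem add_notMem_s8 (hC : IsCascade_s8 Δ Δpos β) (hδ : δ ∈ Δpos) (hperp : PerpBefore β r δ) :
    δ + β r ∉ Δ := by
  intro h
  have := hC.eq_of_sub_mem_closure r _ (hC.add_mem δ hδ _ (hC.mem_pos r) h)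
    (hperp.add (hC.perpBefore r)) (by simpa using AddSubmonoid.subset_closure hδ)
  rw [add_eq_right] at this
  exact hC.zero_notMem_pos (this ▸ hδ)

theorem inner_nonneg_s8 (hC : IsCascade_s8 Δ Δpos β) (hδ : δ ∈ Δpos) (hperp : PerpBefore β r δ) :
    0 ≤ ⟪δ, β r⟫ := by
  by_contra! hneg
  have hne : δ ≠ -β r := by
    rintro rfl
    exact (hC.mem_iff_neg_notMem _ (hC.mem r)).1 (hC.mem_pos r) hδ
  exact hC.add_notMem_s8 hδ hperp
    (hC.isRootSet.add_mem_of_inner_neg (hC.mem r) (hC.subset hδ) hneg hne)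

theorem inner_pos_of_sub_mem_s8 (hC : IsCascade_s8 Δ Δpos β) (hδ : δ ∈ Δpos)
    (hperp : PerpBefore β r δ) (h : β r - δ ∈ Δpos) : 0 < ⟪δ, β r⟫ := by
  refine (hC.inner_nonneg_s8 hδ hperp).lt_of_ne fun h0 => hC.add_notMem_s8 hδ hperp ?_
  -- reflecting `β r - δ` in `β r` gives `-(δ + β r)`
  have := hC.isRootSet.sub_smul_mem (hC.mem r) (hC.subset h) (c := 2)
    (by rw [inner_sub_left, ← h0]; ring)
  simpa [two_smul, sub_add_eq_sub_sub, add_comm] using hC.isRootSet.neg_mem this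

theorem two_mul_inner_eq_of_sub_mem (hC : IsCascade_s8 Δ Δpos β) (hδ : δ ∈ Δpos)
    (hperp : PerpBefore β r δ) (h : β r - δ ∈ Δpos) : 2 * ⟪δ, β r⟫ = ⟪β r, β r⟫ := by
  have hΔ := hC.isRootSet
  obtain ⟨k, hk⟩ := hΔ.exists_int_two_mul_inner (hC.mem r) (hC.subset hδ)
  obtain ⟨k', hk'⟩ := hΔ.exists_int_two_mul_inner (hC.mem r) (hC.subset h)
  have hk1 := hΔ.one_le_of_two_mul_inner_eq (hC.mem r) hk (hC.inner_pos_of_sub_mem_s8 hδ hperp h)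
  have hk'1 := hΔ.one_le_of_two_mul_inner_eq (hC.mem r) hk'
    (hC.inner_pos_of_sub_mem_s8 h ((hC.perpBefore r).sub hperp) (by simpa using hδ))
  have hsum : ((k + k' : ℤ) : ℝ) * ⟪β r, β r⟫ = 2 * ⟪β r, β r⟫ := by
    rw [inner_sub_left] at hk'
    push_cast
    linarith
  have : k + k' = 2 := by exact_mod_cast mul_right_cancel₀ (hC.inner_self_pos r).ne' hsum
  obtain rfl : k = 1 := by omega
  simpa using hk

theorem eq_or_sub_mem_of_inner_pos (hC : IsCascade_s8 Δ Δpos β) (hδ : δ ∈ Δpos)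
    (hperp : PerpBefore β r δ) (hpos : 0 < ⟪δ, β r⟫) : δ = β r ∨ β r - δ ∈ Δpos := by
  by_cases hne : δ = β r
  · exact .inl hne
  have hsub := hC.isRootSet.sub_mem_of_inner_pos (hC.mem r) (hC.subset hδ) hpos hne
  by_cases h : β r - δ ∈ Δpos
  · exact .inr h
  · refine .inl (hC.eq_of_sub_mem hδ hperp ?_)
    rwa [hC.mem_iff_neg_notMem _ hsub, neg_sub]

section Layer

variable {layer : Fin m → Set V}

theorem notMem_layer_of_perpBefore (hC : IsCascade_s8 Δ Δpos β)
    (hlayer : IsCascadeLayers Δpos β layer)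
    (hperp : PerpBefore β r δ) {j : Fin m} (hj : j < r) : δ ∉ layer j := by
  rw [hlayer j]
  rintro ⟨hδ, -, h⟩
  have := hC.two_mul_inner_eq_of_sub_mem hδ (hperp.mono hj.le) h
  linarith [hperp j hj, hC.inner_self_pos j]

theorem perpBefore_of_mem_layer (hC : IsCascade_s8 Δ Δpos β)
    (hlayer : IsCascadeLayers Δpos β layer)
    (hδ : δ ∈ layer r) : PerpBefore β r δ := by
  rw [hlayer r] at hδ
  obtain ⟨hδpos, hearlier, hsub⟩ := hδ
  intro j
  induction j using WellFoundedLT.induction with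
  | _ j ih =>
    intro hjr
    have hperp : PerpBefore β j δ := fun i hi => ih i hi (hi.trans hjr)
    refine (((hC.inner_nonneg_s8 hδpos hperp).lt_or_eq).resolve_left fun hpos => ?_).symm
    rcases hC.eq_or_sub_mem_of_inner_pos hδpos hperp hpos with rfl | h
    · have := hC.eq_of_sub_mem (hC.mem_pos r) ((hC.perpBefore r).mono hjr.le) hsub
      exact hC.zero_notMem_pos (by rwa [this, sub_self] at hsub)
    · refine hearlier j hjr ?_
      rw [hlayer j]
      exact ⟨hδpos, fun i hi => hC.notMem_layer_of_perpBefore hlayer hperp hi, h⟩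

theorem mem_layer_iff (hC : IsCascade_s8 Δ Δpos β)
    (hlayer : IsCascadeLayers Δpos β layer) :
    δ ∈ layer r ↔ δ ∈ Δpos ∧ PerpBefore β r δ ∧ β r - δ ∈ Δpos := by
  refine ⟨fun hδ => ?_, fun ⟨hδ, hperp, h⟩ => ?_⟩
  · have hperp := hC.perpBefore_of_mem_layer hlayer hδ
    rw [hlayer r] at hδ
    exact ⟨hδ.1, hperp, hδ.2.2⟩
  · rw [hlayer r]
    exact ⟨hδ, fun i hi => hC.notMem_layer_of_perpBefore hlayer hperp hi, h⟩

theorem sub_mem_layer (hC : IsCascade_s8 Δ Δpos β)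
    (hlayer : IsCascadeLayers Δpos β layer)
    (hδ : δ ∈ layer r) : β r - δ ∈ layer r := by
  obtain ⟨hδpos, hperp, h⟩ := (hC.mem_layer_iff hlayer).1 hδ
  exact (hC.mem_layer_iff hlayer).2 ⟨h, (hC.perpBefore r).sub hperp, by simpa using hδpos⟩

theorem two_mul_inner_eq_of_mem_layer (hC : IsCascade_s8 Δ Δpos β)
    (hlayer : IsCascadeLayers Δpos β layer)
    (hδ : δ ∈ layer r) : 2 * ⟪δ, β r⟫ = ⟪β r, β r⟫ := by
  obtain ⟨hδpos, hperp, h⟩ := (hC.mem_layer_iff hlayer).1 hδ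
  exact hC.two_mul_inner_eq_of_sub_mem hδpos hperp h

theorem add_eq_of_mem_layer (hC : IsCascade_s8 Δ Δpos β)
    (hlayer : IsCascadeLayers Δpos β layer)
    {α α' : V} (hα : α ∈ layer r) (hα' : α' ∈ layer r) (hsum : α + α' ∈ Δ) : α + α' = β r := by
  obtain ⟨hαpos, hαperp, -⟩ := (hC.mem_layer_iff hlayer).1 hα
  obtain ⟨hα'pos, hα'perp, -⟩ := (hC.mem_layer_iff hlayer).1 hα'
  have hinner : ⟪α + α', β r⟫ = ⟪β r, β r⟫ := by
    rw [inner_add_left]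
    linarith [hC.two_mul_inner_eq_of_mem_layer hlayer hα, hC.two_mul_inner_eq_of_mem_layer hlayer hα']
  have hpos := hC.add_mem α hαpos α' hα'pos hsum
  have hperp := hαperp.add hα'perp
  refine (hC.eq_or_sub_mem_of_inner_pos hpos hperp (hinner ▸ hC.inner_self_pos r)).resolve_right
    fun h => ?_
  linarith [hC.two_mul_inner_eq_of_sub_mem hpos hperp h, hC.inner_self_pos r]

end Layer

end IsCascade_s8

end RootSystem

theorem stepwise_sq_int_stmt8_general
    {V : Type*} [NormedAddCommGroup V] [InnerProductSpace ℝ V]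
    (Δ Δpos : Set V)
    (h0 : (0 : V) ∉ Δ)
    (hrefl : ∀ α ∈ Δ, ∀ γ ∈ Δ, γ - (2 * ⟪γ, α⟫ / ⟪α, α⟫) • α ∈ Δ)
    (hint : ∀ α ∈ Δ, ∀ γ ∈ Δ, ∃ k : ℤ, 2 * ⟪γ, α⟫ / ⟪α, α⟫ = (k : ℝ))
    (hsub : Δpos ⊆ Δ)
    (hpos : ∀ α ∈ Δ, (α ∈ Δpos ↔ -α ∉ Δpos))
    (hclosed : ∀ α ∈ Δpos, ∀ γ ∈ Δpos, α + γ ∈ Δ → α + γ ∈ Δpos)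
    {m : ℕ} (β : Fin m → V)
    (hβpos : ∀ r, β r ∈ Δpos)
    (horth : ∀ r i : Fin m, i < r → ⟪β r, β i⟫ = 0)
    (hmax : ∀ r : Fin m, ∀ α ∈ Δpos, (∀ i : Fin m, i < r → ⟪α, β i⟫ = 0) →
      α - β r ∈ AddSubmonoid.closure Δpos → α = β r)
    (layer : Fin m → Set V)
    (hlayer : ∀ r : Fin m, layer r
      = {α ∈ Δpos | (∀ i : Fin m, i < r → α ∉ layer i) ∧ β r - α ∈ Δpos}) :
    ∀ r : Fin m,
      (∀ α ∈ layer r, -(α - (2 * ⟪α, β r⟫ / ⟪β r, β r⟫) • β r) ∈ layer r) ∧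
      (∀ α ∈ layer r, α + -(α - (2 * ⟪α, β r⟫ / ⟪β r, β r⟫) • β r) = β r) ∧
      (∀ α ∈ layer r, ∀ α' ∈ layer r, α + α' ∈ Δ → α + α' = β r) := by
  have hC : IsCascade_s8 Δ Δpos β :=
    ⟨⟨⟨h0, hrefl, hint⟩, hsub, hpos, hclosed⟩, hβpos, horth, hmax⟩
  intro r
  have hσ : ∀ α ∈ layer r, -(α - (2 * ⟪α, β r⟫ / ⟪β r, β r⟫) • β r) = β r - α := by
    intro α hα
    rw [hC.two_mul_inner_eq_of_mem_layer hlayer hα, div_self (hC.inner_self_pos r).ne', one_smul,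
      neg_sub]
  refine ⟨fun α hα => ?_, fun α hα => ?_, fun α hα α' hα' => hC.add_eq_of_mem_layer hlayer hα hα'⟩
  · exact hσ α hα ▸ hC.sub_mem_layer hlayer hα
  · rw [hσ α hα, add_sub_cancel]

/-- Let `σ_r(α) = -s_{β_r}(α)` where `s_{β_r}` is the Weyl
reflection in the cascade root `β_r`.  Then `σ_r` preserves the layer `Δ⁺_r`,
`α + σ_r(α) = β_r` for all `α ∈ Δ⁺_r`, and if `α, α' ∈ Δ⁺_r` with `α + α'` a
restricted root then `α + α' = β_r`. -/
theorem stepwise_sq_int_stmt8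
    {V : Type*} [NormedAddCommGroup V] [InnerProductSpace ℝ V]
    (Δ Δpos : Set V) (hfin : Δ.Finite)
    (h0 : (0 : V) ∉ Δ)
    (hrefl : ∀ α ∈ Δ, ∀ γ ∈ Δ, γ - (2 * ⟪γ, α⟫ / ⟪α, α⟫) • α ∈ Δ)
    (hint : ∀ α ∈ Δ, ∀ γ ∈ Δ, ∃ k : ℤ, 2 * ⟪γ, α⟫ / ⟪α, α⟫ = (k : ℝ))
    (hsub : Δpos ⊆ Δ)
    (hpos : ∀ α ∈ Δ, (α ∈ Δpos ↔ -α ∉ Δpos))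
    (hclosed : ∀ α ∈ Δpos, ∀ γ ∈ Δpos, α + γ ∈ Δ → α + γ ∈ Δpos)
    {m : ℕ} (β : Fin m → V)
    (hβpos : ∀ r, β r ∈ Δpos)
    (horth : ∀ r i : Fin m, i < r → ⟪β r, β i⟫ = 0)
    (hmax : ∀ r : Fin m, ∀ α ∈ Δpos, (∀ i : Fin m, i < r → ⟪α, β i⟫ = 0) →
      α - β r ∈ AddSubmonoid.closure Δpos → α = β r)
    (hcomplete : ∀ α ∈ Δpos, ∃ i : Fin m, ⟪α, β i⟫ ≠ 0)
    (layer : Fin m → Set V)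
    (hlayer : ∀ r : Fin m, layer r
      = {α ∈ Δpos | (∀ i : Fin m, i < r → α ∉ layer i) ∧ β r - α ∈ Δpos}) :
    ∀ r : Fin m,
      (∀ α ∈ layer r, -(α - (2 * ⟪α, β r⟫ / ⟪β r, β r⟫) • β r) ∈ layer r) ∧
      (∀ α ∈ layer r, α + -(α - (2 * ⟪α, β r⟫ / ⟪β r, β r⟫) • β r) = β r) ∧
      (∀ α ∈ layer r, ∀ α' ∈ layer r, α + α' ∈ Δ → α + α' = β r) :=
  stepwise_sq_int_stmt8_general Δ Δpos h0 hrefl hint hsub hpos hclosed β hβpos horth hmax layer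
    hlayer
end

section
/- Let n = Σ_r l_r be the nilradical of a minimal parabolic, decomposed by cascade layers, with n_r = l₁ + ... + l_r. Then each n_r is an ideal of n and n_r = n_{r−1} ⋊ l_r (semidirect sum: n_{r−1} an ideal of n_r with complementary subalgebra l_r). -/
private lemma brkt_aux {g : Type*} [LieRing g] [LieAlgebra ℝ g]
    {ι κ : Type*} (A : ι → Submodule ℝ g) (B : κ → Submodule ℝ g)
    (C : Submodule ℝ g)
    (h : ∀ i j, ∀ x ∈ A i, ∀ y ∈ B j, ⁅x, y⁆ ∈ C) :
    ∀ x ∈ ⨆ i, A i, ∀ y ∈ ⨆ j, B j, ⁅x, y⁆ ∈ C := by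
  intro x hx
  induction hx using Submodule.iSup_induction' with
  | mem i x hxi =>
    intro y hy
    induction hy using Submodule.iSup_induction' with
    | mem j y hyj => exact h i j x hxi y hyj
    | zero => simp
    | add y z _ _ hy hz => simpa [lie_add] using C.add_mem hy hz
  | zero => intro y hy; simp
  | add x z _ _ hx hz =>
    intro y hy
    simpa [add_lie] using C.add_mem (hx y hy) (hz y hy)

/-- Let `n = Σ_r l_r` be the nilradical of a minimal parabolic,
decomposed by the cascade layers (so the subspaces `l_r` are independent and
satisfy `[l_r, l_s] ⊆ l_{min r s}`), and let `n_r = l_1 + ⋯ + l_r`.  Then each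
`n_r` is an ideal of `n`, and `n_r = n_{r-1} ⋊ l_r`: `n_{r-1}` is an ideal of
`n_r` with complementary subalgebra `l_r`. -/
theorem stepwise_sq_int_stmt9
    {g : Type*} [LieRing g] [LieAlgebra ℝ g]
    {m : ℕ} (l : Fin m → Submodule ℝ g)
    (hind : iSupIndep l)
    (hbr : ∀ r s : Fin m, ∀ x ∈ l r, ∀ y ∈ l s, ⁅x, y⁆ ∈ l (min r s)) :
    ∀ r : Fin m,
      -- `n_r` is an ideal of `n`
      (∀ x ∈ ⨆ i, l i, ∀ y ∈ ⨆ i ≤ r, l i, ⁅x, y⁆ ∈ ⨆ i ≤ r, l i) ∧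
      -- `n_r = n_{r-1} ⊕ l_r` as vector spaces
      ((⨆ i < r, l i) ⊔ l r = ⨆ i ≤ r, l i) ∧
      Disjoint (⨆ i < r, l i) (l r) ∧
      -- `n_{r-1}` is an ideal of `n_r`
      (∀ x ∈ ⨆ i ≤ r, l i, ∀ y ∈ ⨆ i < r, l i, ⁅x, y⁆ ∈ ⨆ i < r, l i) ∧
      -- and `l_r` is a complementary subalgebra
      (∀ x ∈ l r, ∀ y ∈ l r, ⁅x, y⁆ ∈ l r) := by
  intro r
  refine ⟨?_, ?_, ?_, ?_, ?_⟩
  · -- ideal of n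
    have := brkt_aux l (fun j : {j : Fin m // j ≤ r} => l j) (⨆ i ≤ r, l i)
      (fun i j x hx y hy => by
        have : ⁅x, y⁆ ∈ l (min i j.1) := hbr i j.1 x hx y hy
        exact Submodule.mem_iSup_of_mem (min i j.1)
          (Submodule.mem_iSup_of_mem (le_trans (min_le_right _ _) j.2) this))
    intro x hx y hy
    exact this x hx y (by rwa [iSup_subtype'] at hy)
  · -- sup decomposition
    apply le_antisymm
    · refine sup_le (iSup₂_le fun i hi => ?_) ?_
      · exact le_iSup₂_of_le i hi.le le_rfl
      · exact le_iSup₂_of_le r le_rfl le_rfl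
    · refine iSup₂_le fun i hi => ?_
      rcases lt_or_eq_of_le hi with h | h
      · exact le_sup_of_le_left (le_iSup₂_of_le i h le_rfl)
      · exact h ▸ le_sup_right
  · -- disjoint
    refine Disjoint.symm ((hind r).mono_right ?_)
    exact iSup₂_le fun i hi => le_iSup₂_of_le i hi.ne le_rfl
  · -- n_{r-1} ideal of n_r
    have := brkt_aux (fun i : {i : Fin m // i ≤ r} => l i)
      (fun j : {j : Fin m // j < r} => l j) (⨆ i < r, l i)
      (fun i j x hx y hy => by
        have : ⁅x, y⁆ ∈ l (min i.1 j.1) := hbr i.1 j.1 x hx y hy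
        exact Submodule.mem_iSup_of_mem (min i.1 j.1)
          (Submodule.mem_iSup_of_mem (lt_of_le_of_lt (min_le_right _ _) j.2) this))
    intro x hx y hy
    exact this x (by rwa [iSup_subtype'] at hx) y (by rwa [iSup_subtype'] at hy)
  · intro x hx y hy
    simpa using hbr r r x hx y hy
end

section
/- In the setting of a parabolic q_Φ with nilradical n_Φ, suppose g_{β_r} ⊂ n_Φ and define J_r = {α ∈ Δ⁺_r : g_α ⊂ n_Φ}, J'_r = {α ∈ J_r : σ_r(α) ∈ J_r}, J''_r = {α ∈ J_r : σ_r(α) ∉ J_r}. Then the subalgebra l_r ∩ n_Φ = g_{β_r} + Σ_{J_r} g_α has center g_{β_r} + Σ_{J''_r} g_α, and l_r ∩ n_Φ decomposes as the direct sum of ideals (Σ_{J''_r} g_α) ⊕ (g_{β_r} + Σ_{J'_r} g_α). -/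
/-- Membership in a set-indexed supremum of submodules via finitely supported families. -/
lemma mem_biSup_iff_finsupp' {R : Type*} [Semiring R] {M : Type*} [AddCommMonoid M] [Module R M]
    {ι : Type*} (p : ι → Submodule R M) (K : Set ι) (x : M) :
    x ∈ (⨆ i ∈ K, p i) ↔
      ∃ f : ι →₀ M, (∀ i, f i ∈ p i) ∧ (∀ i, f i ≠ 0 → i ∈ K) ∧ f.sum (fun _ v => v) = x := by
  classical
  constructor
  · intro hx
    obtain ⟨f, hf, hsum⟩ :=
      (Submodule.mem_iSup_iff_exists_finsupp (fun i => ⨆ _ : i ∈ K, p i) x).mp hx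
    refine ⟨f, fun i => ?_, fun i hi => ?_, hsum⟩
    · by_cases h : i ∈ K
      · have := hf i; rwa [iSup_pos h] at this
      · have := hf i; rw [iSup_neg h, Submodule.mem_bot] at this
        rw [this]; exact Submodule.zero_mem _
    · by_contra h
      have := hf i; rw [iSup_neg h, Submodule.mem_bot] at this; exact hi this
  · rintro ⟨f, hf, hK, rfl⟩
    rw [Finsupp.sum]
    refine Submodule.sum_mem _ fun i hi => ?_
    have hiK : i ∈ K := hK i (Finsupp.mem_support_iff.mp hi)
    exact Submodule.mem_iSup_of_mem i (Submodule.mem_iSup_of_mem hiK (hf i))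

/-- Bracket with a fixed element on the left, as an additive monoid hom. -/
private def lieLeftHom {g : Type*} [LieRing g] (x : g) : g →+ g :=
  AddMonoidHom.mk' (fun y => ⁅x, y⁆) (lie_add x)

private lemma lie_finset_sum {g : Type*} [LieRing g] {ι : Type*} (x : g) (s : Finset ι)
    (f : ι → g) : ⁅x, ∑ i ∈ s, f i⁆ = ∑ i ∈ s, ⁅x, f i⁆ :=
  map_sum (lieLeftHom x) f s

private lemma finset_sum_lie {g : Type*} [LieRing g] {ι : Type*} (x : g) (s : Finset ι)
    (f : ι → g) : ⁅∑ i ∈ s, f i, x⁆ = ∑ i ∈ s, ⁅f i, x⁆ :=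
  map_sum (AddMonoidHom.mk' (fun y => ⁅y, x⁆) (fun a b => add_lie a b x)) f s

/-- For a parabolic `q_Φ` with nilradical `n_Φ`, suppose
`g_{β_r} ⊆ n_Φ`, and set `J_r = {α ∈ Δ⁺_r : g_α ⊆ n_Φ}`,
`J'_r = {α ∈ J_r : σ_r α ∈ J_r}`, `J''_r = {α ∈ J_r : σ_r α ∉ J_r}`.  Then
`l_r ∩ n_Φ = g_{β_r} + Σ_{J_r} g_α` has center `g_{β_r} + Σ_{J''_r} g_α`, and it
is the direct sum of the ideals `Σ_{J''_r} g_α` and `g_{β_r} + Σ_{J'_r} g_α`. -/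
theorem stepwise_sq_int_stmt18
    {V : Type*} [AddCommGroup V] [Module ℝ V]
    (Δ : Set V)
    {g : Type*} [LieRing g] [LieAlgebra ℝ g]
    (rs : V → Submodule ℝ g)
    (hbr : ∀ (γ δ : V) (x y : g), x ∈ rs γ → y ∈ rs δ → ⁅x, y⁆ ∈ rs (γ + δ))
    (hrs0 : ∀ γ : V, γ ∉ Δ → γ ≠ 0 → rs γ = ⊥)
    -- the cascade root `β_r`, its layer `L = Δ⁺_r`, and the involution `σ = σ_r`
    (βr : V) (L : Set V) (σ : V → V)
    (hσ : ∀ α ∈ L, σ α ∈ L ∧ σ (σ α) = α ∧ α + σ α = βr)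
    (hsum : ∀ α ∈ L, ∀ α' ∈ L, α + α' ∈ Δ → α + α' = βr)
    (hsumβ : ∀ α ∈ insert βr L, βr + α ∉ Δ)
    (hne0 : ∀ α ∈ insert βr L, ∀ α' ∈ insert βr L, α + α' ≠ 0)
    (hnd : ∀ α ∈ L, ∀ x ∈ rs α, x ≠ 0 → ∃ y ∈ rs (σ α), ⁅x, y⁆ ≠ 0)
    (hind : iSupIndep (fun α : ↥(insert βr L) => rs (α : V)))
    -- the roots of `n_Φ`, with `g_{β_r} ⊆ n_Φ`; `J = J_r = {α ∈ Δ⁺_r : g_α ⊆ n_Φ}`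
    (Φnil : Set V) (hβΦ : βr ∈ Φnil) :
    let J : Set V := {α ∈ L | α ∈ Φnil}
    let J' : Set V := {α ∈ J | σ α ∈ J}
    let J'' : Set V := {α ∈ J | σ α ∉ J}
    let lrnΦ : Submodule ℝ g := rs βr ⊔ ⨆ α ∈ J, rs α
    let i1 : Submodule ℝ g := ⨆ α ∈ J'', rs α
    let i2 : Submodule ℝ g := rs βr ⊔ ⨆ α ∈ J', rs α
    -- the center of `l_r ∩ n_Φ` is `g_{β_r} + Σ_{J''} g_α`
    (∀ x ∈ lrnΦ, ((∀ y ∈ lrnΦ, ⁅x, y⁆ = 0) ↔ x ∈ rs βr ⊔ ⨆ α ∈ J'', rs α)) ∧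
    -- `l_r ∩ n_Φ = (Σ_{J''} g_α) ⊕ (g_{β_r} + Σ_{J'} g_α)`, a direct sum of ideals
    (i1 ⊔ i2 = lrnΦ) ∧ (i1 ⊓ i2 = ⊥) ∧
    (∀ x ∈ lrnΦ, ∀ y ∈ i1, ⁅x, y⁆ ∈ i1) ∧
    (∀ x ∈ lrnΦ, ∀ y ∈ i2, ⁅x, y⁆ ∈ i2) := by
  classical
  intro J J' J'' lrnΦ i1 i2
  set S : Set V := insert βr L with hS
  have hβS : βr ∈ S := Set.mem_insert _ _
  have hLS : L ⊆ S := Set.subset_insert _ _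
  -- `βr ∉ L`
  have hβrL : βr ∉ L := by
    intro h
    obtain ⟨hσL, -, hadd⟩ := hσ βr h
    have h0 : σ βr = 0 := by
      have h' := hadd
      rwa [add_eq_left] at h'
    exact hne0 (σ βr) (hLS hσL) (σ βr) (hLS hσL) (by rw [h0, add_zero])
  -- brackets with `rs βr` vanish
  have hbrβ : ∀ γ ∈ S, ∀ x ∈ rs βr, ∀ y ∈ rs γ, ⁅x, y⁆ = 0 := by
    intro γ hγ x hx y hy
    have hb := hbr βr γ x y hx hy
    rw [hrs0 (βr + γ) (hsumβ γ hγ) (hne0 βr hβS γ hγ), Submodule.mem_bot] at hb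
    exact hb
  -- brackets of layer elements with non-partner vanish
  have hbrL0 : ∀ α ∈ L, ∀ α' ∈ L, α' ≠ σ α → ∀ x ∈ rs α, ∀ y ∈ rs α', ⁅x, y⁆ = 0 := by
    intro α hα α' hα' hne x hx y hy
    have hb := hbr α α' x y hx hy
    have hαα' : α + α' ≠ βr := by
      intro h
      exact hne (add_left_cancel (h.trans (hσ α hα).2.2.symm))
    have hnΔ : α + α' ∉ Δ := fun h => hαα' (hsum α hα α' hα' h)
    rw [hrs0 _ hnΔ (hne0 α (hLS hα) α' (hLS hα')), Submodule.mem_bot] at hb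
    exact hb
  -- master vanishing lemma
  have hz : ∀ γ ∈ S, ∀ δ ∈ S, (γ = βr ∨ δ = βr ∨ δ ≠ σ γ) →
      ∀ x ∈ rs γ, ∀ y ∈ rs δ, ⁅x, y⁆ = 0 := by
    intro γ hγ δ hδ hcase x hx y hy
    rcases hcase with h | h | h
    · exact hbrβ δ hδ x (h ▸ hx) y hy
    · have := hbrβ γ hγ y (h ▸ hy) x hx
      rw [← lie_skew, this, neg_zero]
    · rcases hγ with hγ | hγ
      · exact hbrβ δ hδ x (hγ ▸ hx) y hy
      · rcases hδ with hδ | hδ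
        · have := hbrβ γ (hLS hγ) y (hδ ▸ hy) x hx
          rw [← lie_skew, this, neg_zero]
        · exact hbrL0 γ hγ δ hδ h x hx y hy
  -- brackets of anything in the layer land in `rs βr`
  have hm : ∀ γ ∈ S, ∀ δ ∈ S, ∀ x ∈ rs γ, ∀ y ∈ rs δ, ⁅x, y⁆ ∈ rs βr := by
    intro γ hγ δ hδ x hx y hy
    by_cases hc : γ = βr ∨ δ = βr ∨ δ ≠ σ γ
    · rw [hz γ hγ δ hδ hc x hx y hy]; exact Submodule.zero_mem _
    · push_neg at hc
      obtain ⟨hγβ, hδβ, hδσ⟩ := hc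
      have hγL : γ ∈ L := hγ.resolve_left hγβ
      have hb := hbr γ δ x y hx hy
      rwa [hδσ, (hσ γ hγL).2.2] at hb
  -- uniqueness of decompositions
  have huniq : ∀ f : V →₀ g, (∀ γ, f γ ∈ rs γ) → (∀ γ, f γ ≠ 0 → γ ∈ S) →
      f.sum (fun _ v => v) = 0 → f = 0 := by
    intro f hf hfS hfsum
    ext γ
    rw [Finsupp.coe_zero, Pi.zero_apply]
    by_contra hne
    have hγS : γ ∈ S := hfS γ hne
    have hdisj := hind.disjoint_biSup (x := (⟨γ, hγS⟩ : ↥S))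
      (y := {j : ↥S | (j : V) ≠ γ}) (by simp)
    have hsum' : f γ + ∑ δ ∈ f.support.erase γ, f δ = 0 := by
      rw [← hfsum, Finsupp.sum, add_comm, Finset.sum_erase_add]
      exact Finsupp.mem_support_iff.mpr hne
    have hmem2 : f γ ∈ ⨆ j ∈ {j : ↥S | (j : V) ≠ γ}, rs (j : V) := by
      have : f γ = -∑ δ ∈ f.support.erase γ, f δ := by
        rw [eq_neg_iff_add_eq_zero]; exact hsum'
      rw [this]
      refine Submodule.neg_mem _ (Submodule.sum_mem _ fun δ hδ => ?_)
      have hδγ : δ ≠ γ := Finset.ne_of_mem_erase hδ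
      have hδS : δ ∈ S := hfS δ (Finsupp.mem_support_iff.mp (Finset.mem_of_mem_erase hδ))
      exact Submodule.mem_iSup_of_mem (⟨δ, hδS⟩ : ↥S)
        (Submodule.mem_iSup_of_mem hδγ (hf δ))
    exact hne (Submodule.disjoint_def.mp hdisj _ (hf γ) hmem2)
  -- rewriting the three submodules as set-indexed sups
  have hlr : lrnΦ = ⨆ γ ∈ insert βr J, rs γ := by
    simp only [lrnΦ, iSup_insert]
  have hi2 : i2 = ⨆ γ ∈ insert βr J', rs γ := by
    simp only [i2, iSup_insert]
  have hc2 : (rs βr ⊔ ⨆ α ∈ J'', rs α) = ⨆ γ ∈ insert βr J'', rs γ := by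
    simp only [iSup_insert]
  have hJS : ∀ ⦃γ⦄, γ ∈ insert βr J → γ ∈ S := by
    rintro γ (h | h)
    · exact h ▸ hβS
    · exact hLS h.1
  have hJ''S : ∀ ⦃γ⦄, γ ∈ insert βr J'' → γ ∈ S := by
    rintro γ (h | h)
    · exact h ▸ hβS
    · exact hLS h.1.1
  have hJ'S : ∀ ⦃γ⦄, γ ∈ insert βr J' → γ ∈ S := by
    rintro γ (h | h)
    · exact h ▸ hβS
    · exact hLS h.1.1
  -- elements of `rs βr ⊔ ⨆ J''` are central
  have hcent : ∀ x ∈ rs βr ⊔ ⨆ α ∈ J'', rs α, ∀ y ∈ lrnΦ, ⁅x, y⁆ = 0 := by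
    intro x hx y hy
    rw [hc2] at hx
    rw [hlr] at hy
    obtain ⟨f, hf, hfK, rfl⟩ := (mem_biSup_iff_finsupp' rs _ x).mp hx
    obtain ⟨e, he, heK, rfl⟩ := (mem_biSup_iff_finsupp' rs _ y).mp hy
    rw [Finsupp.sum, Finsupp.sum, finset_sum_lie]
    refine Finset.sum_eq_zero fun γ hγ => ?_
    rw [lie_finset_sum]
    refine Finset.sum_eq_zero fun δ hδ => ?_
    have hγK : γ ∈ insert βr J'' := hfK γ (Finsupp.mem_support_iff.mp hγ)
    have hδK : δ ∈ insert βr J := heK δ (Finsupp.mem_support_iff.mp hδ)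
    refine hz γ (hJ''S hγK) δ (hJS hδK) ?_ _ (hf γ) _ (he δ)
    rcases hγK with h | h
    · exact Or.inl h
    · rcases hδK with h' | h'
      · exact Or.inr (Or.inl h')
      · refine Or.inr (Or.inr fun hc => ?_)
        exact h.2 (hc ▸ h')
  -- brackets of two elements of `lrnΦ` land in `rs βr`
  have hclosed : ∀ x ∈ lrnΦ, ∀ y ∈ lrnΦ, ⁅x, y⁆ ∈ rs βr := by
    intro x hx y hy
    rw [hlr] at hx hy
    obtain ⟨f, hf, hfK, rfl⟩ := (mem_biSup_iff_finsupp' rs _ x).mp hx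
    obtain ⟨e, he, heK, rfl⟩ := (mem_biSup_iff_finsupp' rs _ y).mp hy
    rw [Finsupp.sum, Finsupp.sum, finset_sum_lie]
    refine Submodule.sum_mem _ fun γ hγ => ?_
    rw [lie_finset_sum]
    refine Submodule.sum_mem _ fun δ hδ => ?_
    exact hm γ (hJS (hfK γ (Finsupp.mem_support_iff.mp hγ)))
      δ (hJS (heK δ (Finsupp.mem_support_iff.mp hδ))) _ (hf γ) _ (he δ)
  -- main center statement
  refine ⟨?_, ?_, ?_, ?_, ?_⟩
  · intro x hx
    constructor
    · intro hxc
      rw [hlr] at hx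
      obtain ⟨f, hf, hfK, rfl⟩ := (mem_biSup_iff_finsupp' rs _ x).mp hx
      -- components at `J'` vanish
      have hJ'0 : ∀ α ∈ J', f α = 0 := by
        intro α hα
        by_contra hne
        have hαL : α ∈ L := hα.1.1
        obtain ⟨y, hy, hybr⟩ := hnd α hαL (f α) (hf α) hne
        have hσJ : σ α ∈ J := hα.2
        have hylr : y ∈ lrnΦ := by
          rw [hlr]
          exact Submodule.mem_iSup_of_mem (σ α)
            (Submodule.mem_iSup_of_mem (Set.mem_insert_of_mem _ hσJ) hy)
        have hcalc : ⁅f.sum (fun _ v => v), y⁆ = ⁅f α, y⁆ := by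
          rw [Finsupp.sum, finset_sum_lie]
          refine Finset.sum_eq_single α (fun γ hγ hγα => ?_) (fun hα' => ?_)
          · have hγK : γ ∈ insert βr J := hfK γ (Finsupp.mem_support_iff.mp hγ)
            refine hz γ (hJS hγK) (σ α) (hLS (hσ α hαL).1) ?_ _ (hf γ) _ hy
            rcases hγK with h | h
            · exact Or.inl h
            · refine Or.inr (Or.inr fun hc => ?_)
              have hγL : γ ∈ L := h.1
              have : α = γ := by
                have h1 := (hσ α hαL).2.1
                have h2 := (hσ γ hγL).2.1
                rw [← h1, hc, h2]
              exact hγα this.symm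
          · rw [Finsupp.notMem_support_iff.mp hα', zero_lie]
        have hxc' := hxc _ hylr
        rw [hcalc] at hxc'
        exact hybr hxc'
      -- now the decomposition lies in `rs βr ⊔ ⨆ J''`
      rw [Finsupp.sum]
      refine Submodule.sum_mem _ fun γ hγ => ?_
      rcases hfK γ (Finsupp.mem_support_iff.mp hγ) with h | h
      · exact Submodule.mem_sup_left (h ▸ hf γ)
      · by_cases hσγ : σ γ ∈ J
        · rw [hJ'0 γ ⟨h, hσγ⟩]; exact Submodule.zero_mem _
        · refine Submodule.mem_sup_right ?_
          exact Submodule.mem_iSup_of_mem γ (Submodule.mem_iSup_of_mem ⟨h, hσγ⟩ (hf γ))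
    · intro hx' y hy
      exact hcent x hx' y hy
  -- `i1 ⊔ i2 = lrnΦ`
  · have hJsplit : J = J' ∪ J'' := by
      ext α
      constructor
      · intro h
        by_cases hσ' : σ α ∈ J
        · exact Or.inl ⟨h, hσ'⟩
        · exact Or.inr ⟨h, hσ'⟩
      · rintro (h | h)
        · exact h.1
        · exact h.1
    have : (⨆ α ∈ J, rs α) = (⨆ α ∈ J', rs α) ⊔ ⨆ α ∈ J'', rs α := by
      rw [hJsplit, iSup_union]
    simp only [lrnΦ, i1, i2, this]
    rw [sup_comm (⨆ α ∈ J'', rs α) _, sup_assoc]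
  -- `i1 ⊓ i2 = ⊥`
  · rw [eq_bot_iff]
    intro x hx
    rw [Submodule.mem_bot]
    obtain ⟨hx1, hx2⟩ := Submodule.mem_inf.mp hx
    rw [hi2] at hx2
    obtain ⟨f, hf, hfK, hfs⟩ := (mem_biSup_iff_finsupp' rs _ x).mp hx1
    obtain ⟨e, he, heK, hes⟩ := (mem_biSup_iff_finsupp' rs _ x).mp hx2
    have hfe : f - e = 0 := by
      refine huniq (f - e) (fun γ => ?_) (fun γ hγ => ?_) ?_
      · rw [Finsupp.sub_apply]; exact Submodule.sub_mem _ (hf γ) (he γ)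
      · rw [Finsupp.sub_apply, sub_ne_zero] at hγ
        by_cases h : f γ = 0
        · exact hJ'S (heK γ (fun h' => hγ (h.trans h'.symm)))
        · exact hLS (hfK γ h).1.1
      · rw [Finsupp.sum_sub_index (fun _ _ _ => rfl), hfs, hes, sub_self]
    have hf0 : f = 0 := by
      ext γ
      rw [Finsupp.coe_zero, Pi.zero_apply]
      by_contra hne
      have h1 : γ ∈ J'' := hfK γ hne
      have h2 : e γ = f γ := by
        have := congrFun (congrArg (DFunLike.coe) hfe) γ
        rw [Finsupp.sub_apply] at this
        simpa [sub_eq_zero] using (sub_eq_zero.mp this).symm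
      have h3 : γ ∈ insert βr J' := heK γ (by rw [h2]; exact hne)
      rcases h3 with h | h
      · exact hβrL (h ▸ h1.1.1)
      · exact h1.2 h.2
    rw [← hfs, hf0, Finsupp.sum_zero_index]
  -- `i1` is an ideal (it is central)
  · intro x hx y hy
    have hy' : y ∈ rs βr ⊔ ⨆ α ∈ J'', rs α := Submodule.mem_sup_right hy
    have hylr : y ∈ lrnΦ := by
      rw [hlr]
      rw [hc2] at hy'
      obtain ⟨f, hf, hfK, rfl⟩ := (mem_biSup_iff_finsupp' rs _ y).mp hy'
      refine (mem_biSup_iff_finsupp' rs _ _).mpr ⟨f, hf, fun γ hγ => ?_, rfl⟩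
      rcases hfK γ hγ with h | h
      · exact h ▸ Set.mem_insert _ _
      · exact Set.mem_insert_of_mem _ h.1
    have := hcent y hy' x hx
    rw [← lie_skew, this, neg_zero]
    exact Submodule.zero_mem _
  -- `i2` is an ideal (brackets land in `rs βr ≤ i2`)
  · intro x hx y hy
    have hylr : y ∈ lrnΦ := by
      have : i2 ≤ lrnΦ := by
        refine sup_le_sup le_rfl (iSup_mono fun α => ?_)
        exact iSup_le fun h => le_iSup_of_le h.1 le_rfl
      exact this hy
    exact Submodule.mem_sup_left (hclosed x hx y hylr)
end
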